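/- Assume f satisfies (f1) and (f2), let 0 < a < b < ∞, and let u₁ and u₂ be two positive solutions of (R) with 0 < u₁'(a) < u₂'(a). Then M₁ < M₂, and for all s ∈ (β, M₁): r₁(s) > r₂(s) and r₁(s)^{n−1}·u₁'(r₁(s)) < r₂(s)^{n−1}·u₂'(r₂(s)) (the latter quantity being rᵢ(s)^{n−1}/rᵢ'(s)). -/

import Mathlib

open Set Filter MeasureTheory

/-- `F(s) = ∫₀ˢ f(t) dt`. -/
noncomputable def Fint (f : ℝ → ℝ) (s : ℝ) : ℝ := ∫ t in (0:ℝ)..s, f t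

/-- Condition (f1): `f` is continuous on `[0,∞)`, continuously differentiable on `(0,∞)`,
and `f' ∈ L¹(0,1)`. -/
def CondF1 (f : ℝ → ℝ) : Prop :=
  ContinuousOn f (Ici 0) ∧ (∀ s ∈ Ioi (0:ℝ), DifferentiableAt ℝ f s) ∧
  ContinuousOn (deriv f) (Ioi 0) ∧ IntervalIntegrable (deriv f) volume 0 1

/-- Condition (f2) in the case `β > B > 0`. -/
def CondF2B (f : ℝ → ℝ) (β B : ℝ) : Prop :=
  f 0 = 0 ∧ 0 < B ∧ B < β ∧ (∀ s, B < s → 0 < f s) ∧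
  (∀ s ∈ Icc (0:ℝ) B, f s ≤ 0) ∧ (∃ ε > (0:ℝ), ∀ s ∈ Ioo (0:ℝ) ε, f s < 0) ∧
  Fint f β = 0

/-- Condition (f2): either `β = B = 0` and `f > 0` on `(0,∞)`, or `β > B > 0` with the
sign conditions and `F(β) = 0`. -/
def CondF2 (f : ℝ → ℝ) (β B : ℝ) : Prop :=
  (β = 0 ∧ B = 0 ∧ f 0 = 0 ∧ ∀ s, 0 < s → 0 < f s) ∨ CondF2B f β B

/-- Condition (f3): the derivative of `s ↦ F(s)/f(s)` is `≥ (n-2)/(2n)` for every `s > β`. -/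
def CondF3 (n : ℕ) (f : ℝ → ℝ) (β : ℝ) : Prop :=
  ∀ s, β < s → ∃ d, ((n : ℝ) - 2) / (2 * (n : ℝ)) ≤ d ∧
    HasDerivAt (fun t => Fint f t / f t) d s

/-- Condition (f4): superlinearity `f(s) ≤ f'(s)(s - B)` for `s > B`, with
`f(s) ≢ f'(s)(s - B)` on `[B, β]`. -/
def CondF4 (f : ℝ → ℝ) (β B : ℝ) : Prop :=
  (∀ s, B < s → f s ≤ deriv f s * (s - B)) ∧
  ¬ (∀ s ∈ Icc B β, f s = deriv f s * (s - B))

/-- A positive solution of problem (R) on the annulus `a < |x| < b`: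
`u` is continuous on `[a,b]`, differentiable up to the boundary with derivative `u'`
(one-sided at the endpoints), `u'` is continuous on `[a,b]`, `u` is twice continuously
differentiable on `(a,b)` where it satisfies `u'' + ((n-1)/r) u' + f(u) = 0`,
`u(a) = u(b) = 0` and `u > 0` on `(a,b)`. -/
def IsPosSolAnn (n : ℕ) (a b : ℝ) (f u u' : ℝ → ℝ) : Prop :=
  ContinuousOn u (Icc a b) ∧
  (∀ r ∈ Icc a b, HasDerivWithinAt u (u' r) (Icc a b) r) ∧
  ContinuousOn u' (Icc a b) ∧
  (∀ r ∈ Ioo a b, HasDerivAt u (u' r) r) ∧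
  (∀ r ∈ Ioo a b, HasDerivAt u' (-(((n : ℝ) - 1) / r * u' r + f (u r))) r) ∧
  u a = 0 ∧ u b = 0 ∧ (∀ r ∈ Ioo a b, 0 < u r)

/-- A positive solution of the exterior problem (R) with `b = ∞`:
`u` is continuous on `[a,∞)`, differentiable on `[a,∞)` with derivative `u'`
(one-sided at `a`), twice continuously differentiable on `(a,∞)` where it satisfies
`u'' + ((n-1)/r) u' + f(u) = 0`, `u(a) = 0`, `u > 0` on `(a,∞)` and `u(r) → 0` as `r → ∞`. -/
def IsPosSolExt (n : ℕ) (a : ℝ) (f u u' : ℝ → ℝ) : Prop :=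
  ContinuousOn u (Ici a) ∧
  (∀ r ∈ Ici a, HasDerivWithinAt u (u' r) (Ici a) r) ∧
  (∀ r ∈ Ioi a, HasDerivAt u (u' r) r) ∧
  (∀ r ∈ Ioi a, HasDerivAt u' (-(((n : ℝ) - 1) / r * u' r + f (u r))) r) ∧
  u a = 0 ∧ (∀ r ∈ Ioi a, 0 < u r) ∧
  Tendsto u atTop (nhds 0)

/-- The Erbe–Tang functional
`P(s) = -2n (F(s)/f(s)) ρ(s)^{n-1} u'(ρ(s)) - ρ(s)^n (u'(ρ(s)))² - 2 ρ(s)^n F(s)`,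
where `ρ` is an inverse branch of the solution `u` with derivative `u'`. -/
noncomputable def Pfun (n : ℕ) (f : ℝ → ℝ) (ρ u' : ℝ → ℝ) (s : ℝ) : ℝ :=
  -2 * (n : ℝ) * (Fint f s / f s) * (ρ s) ^ (n - 1) * u' (ρ s)
    - (ρ s) ^ n * (u' (ρ s)) ^ 2 - 2 * (ρ s) ^ n * Fint f s

open Topology

/-!
Read the increasing part of each solution in the variable `s = u(r)`: `ρᵢ(s)` is the radius and
`vᵢ(s) = uᵢ'(ρᵢ(s))`, so that `rᵢ(s)^{n-1} uᵢ'(rᵢ(s)) = ρᵢ^{n-1} vᵢ`. Both branches start at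
`ρ = a` with `v₁ < v₂`, and a continuous induction in `s` shows that `ρ₂ < ρ₁` and `v₁ < v₂`
persist. At a first failure `ρ₂ ≤ ρ₁` still holds, and:
* for `s ≤ β`, where `F ≤ 0`, the gap `ρ₂^{2(n-1)} (v₂² + 2F) - ρ₁^{2(n-1)} (v₁² + 2F)` has
  derivative `4(n-1) F (ρ₂^{2n-3}/v₂ - ρ₁^{2n-3}/v₁) ≥ 0`, so it stays positive;
* for `s > β`, where `f > 0`, the gap `(ρ₂^{n-1} v₂)² - (ρ₁^{n-1} v₁)²` has derivative
  `2f (ρ₁^{2(n-1)} - ρ₂^{2(n-1)}) ≥ 0`, and at `β` it equals the first gap since `F(β) = 0`.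
Either way `v₁ < v₂` there (in the first case because `v₂² + 2F ≥ 0`: this energy decreases
along the branch down to `2F(M₂) > 0`), and then `(ρ₁ - ρ₂)' = 1/v₁ - 1/v₂ > 0` forbids `ρ₁ = ρ₂`.
Finally, `M₂ ≤ M₁` is impossible: at `s = M₂` the second gap would be `-(ρ₁^{n-1} v₁)² ≤ 0`,
because `v₂(M₂) = u₂'(c₂) = 0`.
-/

section Primitive

variable {f : ℝ → ℝ}

theorem intervalIntegrable_of_continuousOn_Ici (hf : ContinuousOn f (Ici 0)) {p q : ℝ}
    (hp : 0 ≤ p) (hq : 0 ≤ q) : IntervalIntegrable f volume p q :=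
  (hf.mono fun _ hx => (le_inf hp hq).trans hx.1).intervalIntegrable

theorem Fint_zero : Fint f 0 = 0 := intervalIntegral.integral_same

theorem hasDerivAt_Fint (hf : ContinuousOn f (Ici 0)) {s : ℝ} (hs : 0 < s) :
    HasDerivAt (Fint f) (f s) s :=
  intervalIntegral.integral_hasDerivAt_right
    (intervalIntegrable_of_continuousOn_Ici hf le_rfl hs.le)
    ((hf.mono Ioi_subset_Ici_self).stronglyMeasurableAtFilter isOpen_Ioi s hs)
    (hf.continuousAt (Ici_mem_nhds hs))

theorem continuousOn_Fint (hf : ContinuousOn f (Ici 0)) {X : ℝ} (hX : 0 ≤ X) :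
    ContinuousOn (Fint f) (Icc 0 X) := by
  have h := intervalIntegral.continuousOn_primitive_interval (μ := volume) (a := 0) (b := X)
    (f := f) (by rw [uIcc_of_le hX]; exact (hf.mono Icc_subset_Ici_self).integrableOn_Icc)
  rwa [uIcc_of_le hX] at h

theorem Fint_add_integral (hf : ContinuousOn f (Ici 0)) {p q : ℝ} (hp : 0 ≤ p) (hq : 0 ≤ q) :
    Fint f p + ∫ t in p..q, f t = Fint f q :=
  intervalIntegral.integral_add_adjacent_intervals
    (intervalIntegrable_of_continuousOn_Ici hf le_rfl hp)
    (intervalIntegrable_of_continuousOn_Ici hf hp hq)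

end Primitive

namespace CondF2

variable {f : ℝ → ℝ} {β B : ℝ}

theorem nonneg (h : CondF2 f β B) : 0 ≤ β := by
  rcases h with h | h
  · exact h.1.ge
  · exact h.2.1.le.trans h.2.2.1.le

theorem pos_of_lt (h : CondF2 f β B) {s : ℝ} (hs : β < s) : 0 < f s := by
  rcases h with h | h
  · exact h.2.2.2 s (h.1 ▸ hs)
  · exact h.2.2.2.1 s (h.2.2.1.trans hs)

theorem Fint_eq_zero (h : CondF2 f β B) : Fint f β = 0 := by
  rcases h with h | h
  · rw [h.1, Fint_zero]
  · exact h.2.2.2.2.2.2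

theorem Fint_pos_of_lt (h : CondF2 f β B) (hf : ContinuousOn f (Ici 0)) {s : ℝ} (hs : β < s) :
    0 < Fint f s := by
  rw [← Fint_add_integral hf h.nonneg (h.nonneg.trans hs.le), h.Fint_eq_zero, zero_add]
  exact intervalIntegral.intervalIntegral_pos_of_pos_on
    (intervalIntegrable_of_continuousOn_Ici hf h.nonneg (h.nonneg.trans hs.le))
    (fun x hx => h.pos_of_lt hx.1) hs

theorem Fint_nonpos (h : CondF2 f β B) (hf : ContinuousOn f (Ici 0)) {s : ℝ}
    (hs : s ∈ Icc 0 β) : Fint f s ≤ 0 := by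
  rcases h with h | ⟨-, hB, hBβ, hpos, hneg, -, hFβ⟩
  · rw [le_antisymm (h.1 ▸ hs.2) hs.1, Fint_zero]
  rcases le_or_gt s B with hsB | hBs
  · have h := intervalIntegral.integral_mono_on hs.1
      (intervalIntegrable_of_continuousOn_Ici hf le_rfl hs.1) intervalIntegrable_const
      fun t ht => hneg t ⟨ht.1, ht.2.trans hsB⟩
    rwa [intervalIntegral.integral_const, smul_zero] at h
  · rw [← hFβ, ← Fint_add_integral hf hs.1 (hB.le.trans hBβ.le), le_add_iff_nonneg_right]
    exact intervalIntegral.integral_nonneg hs.2 fun t ht => (hpos t (hBs.trans_le ht.1)).le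

end CondF2

section RealAnalysis

theorem monotoneOn_Icc_of_hasDerivAt_nonneg {g g' : ℝ → ℝ} {p q : ℝ}
    (hg : ContinuousOn g (Icc p q)) (hd : ∀ t ∈ Ioo p q, HasDerivAt g (g' t) t)
    (hg' : ∀ t ∈ Ioo p q, 0 ≤ g' t) : MonotoneOn g (Icc p q) :=
  monotoneOn_of_hasDerivWithinAt_nonneg (convex_Icc p q) hg
    (by simpa only [interior_Icc] using fun t ht => (hd t ht).hasDerivWithinAt)
    (by simpa only [interior_Icc] using hg')

theorem antitoneOn_Icc_of_hasDerivAt_nonpos {g g' : ℝ → ℝ} {p q : ℝ}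
    (hg : ContinuousOn g (Icc p q)) (hd : ∀ t ∈ Ioo p q, HasDerivAt g (g' t) t)
    (hg' : ∀ t ∈ Ioo p q, g' t ≤ 0) : AntitoneOn g (Icc p q) :=
  antitoneOn_of_hasDerivWithinAt_nonpos (convex_Icc p q) hg
    (by simpa only [interior_Icc] using fun t ht => (hd t ht).hasDerivWithinAt)
    (by simpa only [interior_Icc] using hg')

theorem strictMonoOn_Icc_of_hasDerivAt_pos {g g' : ℝ → ℝ} {p q : ℝ}
    (hg : ContinuousOn g (Icc p q)) (hd : ∀ t ∈ Ioo p q, HasDerivAt g (g' t) t)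
    (hg' : ∀ t ∈ Ioo p q, 0 < g' t) : StrictMonoOn g (Icc p q) :=
  strictMonoOn_of_hasDerivWithinAt_pos (convex_Icc p q) hg
    (by simpa only [interior_Icc] using fun t ht => (hd t ht).hasDerivWithinAt)
    (by simpa only [interior_Icc] using hg')

theorem pos_of_hasDerivAt_pos_of_pos_left {g : ℝ → ℝ} {x t d : ℝ} (hxt : x < t)
    (hd : HasDerivAt g d t) (hd₀ : 0 < d) (hg : ∀ τ ∈ Ioo x t, 0 < g τ) : 0 < g t := by
  have hslope : Tendsto (slope g t) (𝓝[<] t) (𝓝 d) :=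
    (hasDerivAt_iff_tendsto_slope.mp hd).mono_left (nhdsWithin_mono _ fun τ hτ => ne_of_lt hτ)
  obtain ⟨τ, hτd, hτ⟩ :=
    ((hslope.eventually (lt_mem_nhds hd₀)).and (Ioo_mem_nhdsLT hxt)).exists
  rw [slope_def_field] at hτd
  have hgτ : g τ < g t := sub_neg.1
    ((div_pos_iff.1 hτd).resolve_left fun h => h.2.not_gt (sub_neg.2 hτ.2)).1
  linarith [hg τ hτ]

theorem eq_zero_of_pos_left_of_neg_right {g : ℝ → ℝ} {a b c : ℝ} (hc : c ∈ Ioo a b)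
    (hg : ContinuousAt g c) (hleft : ∀ x ∈ Ioo a c, 0 < g x)
    (hright : ∀ x ∈ Ioo c b, g x < 0) : g c = 0 :=
  le_antisymm
    (hg.continuousWithinAt.closure_le (by simp [closure_Ioo hc.2.ne, hc.2.le])
      continuousWithinAt_const fun x hx => (hright x hx).le)
    (continuousWithinAt_const.closure_le (by simp [closure_Ioo hc.1.ne, hc.1.le])
      hg.continuousWithinAt fun x hx => (hleft x hx).le)

theorem forall_mem_Ioo_of_real_induction {P : ℝ → Prop} {a b : ℝ}
    (hstart : ∀ᶠ t in 𝓝[>] a, P t)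
    (hopen : ∀ t ∈ Ioo a b, P t → ∀ᶠ τ in 𝓝[>] t, P τ)
    (hstep : ∀ t ∈ Ioo a b, (∀ τ ∈ Ioo a t, P τ) → P t) :
    ∀ t ∈ Ioo a b, P t := by
  by_contra! ⟨t₀, ht₀, hPt₀⟩
  set S := {t ∈ Ioo a b | ¬ P t}
  have hS : S.Nonempty := ⟨t₀, ht₀, hPt₀⟩
  have hbdd : BddBelow S := ⟨a, fun t ht => ht.1.1.le⟩
  have hst₀ : sInf S ≤ t₀ := csInf_le hbdd ⟨ht₀, hPt₀⟩
  obtain ⟨u, hau, hu⟩ := (nhdsGT_basis a).eventually_iff.mp hstart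
  have hs : sInf S ∈ Ioo a b :=
    ⟨hau.trans_le (le_csInf hS fun t ht => not_lt.mp fun htu => ht.2 (hu ⟨ht.1.1, htu⟩)),
      hst₀.trans_lt ht₀.2⟩
  have hPs : P (sInf S) := hstep _ hs fun τ hτ => by
    by_contra hP
    exact (csInf_le hbdd ⟨⟨hτ.1, hτ.2.trans hs.2⟩, hP⟩).not_gt hτ.2
  obtain ⟨w, hsw, hw⟩ := (nhdsGT_basis _).eventually_iff.mp (hopen _ hs hPs)
  refine hsw.not_ge (le_csInf hS fun t ht => not_lt.mp fun htw => ht.2 ?_)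
  rcases (csInf_le hbdd ht).eq_or_lt with h | h
  · exact h ▸ hPs
  · exact hw ⟨h, htw⟩

theorem IsCompact.continuousOn_image_of_leftInvOn {X Y : Type*} [TopologicalSpace X]
    [TopologicalSpace Y] [T2Space Y] {u : X → Y} {ρ : Y → X} {K : Set X} (hK : IsCompact K)
    (hu : ContinuousOn u K) (hinv : LeftInvOn ρ u K) : ContinuousOn ρ (u '' K) := by
  refine continuousOn_iff_isClosed.2 fun C hC => ⟨u '' (C ∩ K),
    ((hK.inter_left hC).image_of_continuousOn (hu.mono inter_subset_right)).isClosed, ?_⟩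
  rw [← hinv.image_inter']
  exact (inter_eq_left.2 (image_mono inter_subset_right)).symm

end RealAnalysis

/-- The increasing part of a radial solution `u`, read in the variable `s = u(r)`:
`ρ` inverts `u` on `[0, M]` and `v = u' ∘ ρ`, so that the radial equation becomes the system
`ρ' = 1/v`, `v' = -((n-1)/ρ · v + f(s))/v`. -/
structure RadialBranch (n : ℕ) (f : ℝ → ℝ) (a M : ℝ) (ρ v : ℝ → ℝ) : Prop where
  continuousOn_ρ : ContinuousOn ρ (Icc 0 M)
  continuousOn_v : ContinuousOn v (Icc 0 M)
  ρ_zero : ρ 0 = a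
  ρ_pos : ∀ s ∈ Icc 0 M, 0 < ρ s
  v_pos : ∀ s ∈ Ico 0 M, 0 < v s
  hasDerivAt_ρ : ∀ s ∈ Ioo 0 M, HasDerivAt ρ (v s)⁻¹ s
  hasDerivAt_v : ∀ s ∈ Ioo 0 M, HasDerivAt v (-(((n : ℝ) - 1) / ρ s * v s + f s) * (v s)⁻¹) s

def flux (n : ℕ) (ρ v : ℝ → ℝ) (s : ℝ) : ℝ := ρ s ^ (n - 1) * v s

noncomputable def energy (f v : ℝ → ℝ) (s : ℝ) : ℝ := v s ^ 2 + 2 * Fint f s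

noncomputable def weightedEnergy (n : ℕ) (f ρ v : ℝ → ℝ) (s : ℝ) : ℝ :=
  (ρ s ^ (n - 1)) ^ 2 * energy f v s

theorem flux_sq (n : ℕ) (ρ v : ℝ → ℝ) (s : ℝ) :
    flux n ρ v s ^ 2 = (ρ s ^ (n - 1)) ^ 2 * v s ^ 2 :=
  mul_pow _ _ 2

theorem weightedEnergy_eq_flux_sq {n : ℕ} {f ρ v : ℝ → ℝ} {s : ℝ} (hF : Fint f s = 0) :
    weightedEnergy n f ρ v s = flux n ρ v s ^ 2 := by
  rw [weightedEnergy, energy, hF, flux_sq]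
  ring

namespace RadialBranch

variable {n : ℕ} {f : ℝ → ℝ} {a M : ℝ} {ρ v : ℝ → ℝ}

theorem continuousAt_ρ (hB : RadialBranch n f a M ρ v) {s : ℝ} (hs : s ∈ Ioo 0 M) :
    ContinuousAt ρ s :=
  hB.continuousOn_ρ.continuousAt (Icc_mem_nhds hs.1 hs.2)

theorem continuousAt_v (hB : RadialBranch n f a M ρ v) {s : ℝ} (hs : s ∈ Ioo 0 M) :
    ContinuousAt v s :=
  hB.continuousOn_v.continuousAt (Icc_mem_nhds hs.1 hs.2)

theorem continuousOn_flux (hB : RadialBranch n f a M ρ v) :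
    ContinuousOn (flux n ρ v) (Icc 0 M) :=
  (hB.continuousOn_ρ.pow _).mul hB.continuousOn_v

theorem continuousOn_energy (hB : RadialBranch n f a M ρ v) (hf : ContinuousOn f (Ici 0))
    (hM : 0 ≤ M) : ContinuousOn (energy f v) (Icc 0 M) :=
  (hB.continuousOn_v.pow 2).add (continuousOn_const.mul (continuousOn_Fint hf hM))

theorem continuousOn_weightedEnergy (hB : RadialBranch n f a M ρ v)
    (hf : ContinuousOn f (Ici 0)) (hM : 0 ≤ M) :
    ContinuousOn (weightedEnergy n f ρ v) (Icc 0 M) :=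
  ((hB.continuousOn_ρ.pow _).pow 2).mul (hB.continuousOn_energy hf hM)

theorem flux_pos (hB : RadialBranch n f a M ρ v) {s : ℝ} (hs : s ∈ Ico 0 M) : 0 < flux n ρ v s :=
  mul_pos (pow_pos (hB.ρ_pos s (Ico_subset_Icc_self hs)) _) (hB.v_pos s hs)

theorem hasDerivAt_flux (hB : RadialBranch n f a M ρ v) (hn : 2 ≤ n) {s : ℝ}
    (hs : s ∈ Ioo 0 M) : HasDerivAt (flux n ρ v) (-(ρ s ^ (n - 1) * f s / v s)) s := by
  obtain ⟨k, rfl⟩ := Nat.exists_eq_add_of_le' hn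
  have hρ := (hB.ρ_pos s (Ioo_subset_Icc_self hs)).ne'
  have hv := (hB.v_pos s (Ioo_subset_Ico_self hs)).ne'
  refine (((hB.hasDerivAt_ρ s hs).pow (k + 1)).mul (hB.hasDerivAt_v s hs)).congr_deriv ?_
  simp only [Nat.add_sub_cancel, Pi.pow_apply]
  push_cast
  field_simp
  ring

theorem hasDerivAt_flux_sq (hB : RadialBranch n f a M ρ v) (hn : 2 ≤ n) {s : ℝ}
    (hs : s ∈ Ioo 0 M) :
    HasDerivAt (fun t => flux n ρ v t ^ 2) (-2 * (ρ s ^ (n - 1)) ^ 2 * f s) s := by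
  have hv := (hB.v_pos s (Ioo_subset_Ico_self hs)).ne'
  refine ((hB.hasDerivAt_flux hn hs).pow 2).congr_deriv ?_
  simp only [flux]
  field_simp
  ring

theorem hasDerivAt_energy (hB : RadialBranch n f a M ρ v) (hf : ContinuousOn f (Ici 0)) {s : ℝ}
    (hs : s ∈ Ioo 0 M) : HasDerivAt (energy f v) (-(2 * ((n : ℝ) - 1) * v s / ρ s)) s := by
  have hv := (hB.v_pos s (Ioo_subset_Ico_self hs)).ne'
  refine (((hB.hasDerivAt_v s hs).pow 2).add
    ((hasDerivAt_Fint hf hs.1).const_mul 2)).congr_deriv ?_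
  field_simp
  ring

theorem hasDerivAt_weightedEnergy (hB : RadialBranch n f a M ρ v) (hn : 2 ≤ n)
    (hf : ContinuousOn f (Ici 0)) {s : ℝ} (hs : s ∈ Ioo 0 M) :
    HasDerivAt (weightedEnergy n f ρ v)
      (4 * ((n : ℝ) - 1) * Fint f s * ρ s ^ (2 * n - 3) / v s) s := by
  obtain ⟨k, rfl⟩ := Nat.exists_eq_add_of_le' hn
  have hρ := (hB.ρ_pos s (Ioo_subset_Icc_self hs)).ne'
  have hv := (hB.v_pos s (Ioo_subset_Ico_self hs)).ne'
  refine ((((hB.hasDerivAt_ρ s hs).pow (k + 1)).pow 2).mul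
    (hB.hasDerivAt_energy hf hs)).congr_deriv ?_
  rw [show 2 * (k + 2) - 3 = 2 * k + 1 by omega]
  simp only [Nat.add_sub_cancel, Pi.pow_apply, energy]
  push_cast
  field_simp
  ring

theorem energy_nonneg (hB : RadialBranch n f a M ρ v) (hn : 1 ≤ n)
    (hf : ContinuousOn f (Ici 0)) (hFM : 0 ≤ Fint f M) {s : ℝ} (hs : s ∈ Icc 0 M) :
    0 ≤ energy f v s := by
  have hM : 0 ≤ M := hs.1.trans hs.2
  have hanti := antitoneOn_Icc_of_hasDerivAt_nonpos (hB.continuousOn_energy hf hM)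
    (fun t ht => hB.hasDerivAt_energy hf ht) fun t ht => by
      have hρ := hB.ρ_pos t (Ioo_subset_Icc_self ht)
      have hv := hB.v_pos t (Ioo_subset_Ico_self ht)
      have hn' : (0 : ℝ) ≤ (n : ℝ) - 1 := sub_nonneg.2 (by exact_mod_cast hn)
      exact neg_nonpos.2 (by positivity)
  calc 0 ≤ energy f v M := by unfold energy; positivity
    _ ≤ energy f v s := hanti hs (right_mem_Icc.2 hM) hs.2

end RadialBranch

theorem IsPosSolAnn.radialBranch {n : ℕ} {a b c M : ℝ} {f u u' r : ℝ → ℝ} (ha : 0 < a)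
    (h : IsPosSolAnn n a b f u u') (hc : c ∈ Ioo a b) (hup : ∀ x ∈ Ico a c, 0 < u' x)
    (hM : M = u c) (hmem : ∀ s ∈ Icc 0 M, r s ∈ Icc a c ∧ u (r s) = s)
    (hinv : ∀ x ∈ Icc a c, r (u x) = x) :
    RadialBranch n f a M r (fun s => u' (r s)) := by
  obtain ⟨hu, -, hu', hud, hu'd, hua, -, -⟩ := h
  have hac : Icc a c ⊆ Icc a b := Icc_subset_Icc_right hc.2.le
  have hmono : StrictMonoOn u (Icc a c) := strictMonoOn_Icc_of_hasDerivAt_pos (hu.mono hac)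
    (fun x hx => hud x ⟨hx.1, hx.2.trans hc.2⟩) fun x hx => hup x ⟨hx.1.le, hx.2⟩
  have himage : u '' Icc a c = Icc 0 M := by
    rw [(hu.mono hac).image_Icc_of_monotoneOn hc.1.le hmono.monotoneOn, hua, hM]
  have hr : ContinuousOn r (Icc 0 M) :=
    himage ▸ isCompact_Icc.continuousOn_image_of_leftInvOn (hu.mono hac) hinv
  have hr_lt : ∀ s ∈ Ico 0 M, r s < c := fun s hs =>
    (hmem s (Ico_subset_Icc_self hs)).1.2.lt_of_ne fun heq =>
      hs.2.ne (by rw [← (hmem s (Ico_subset_Icc_self hs)).2, heq, hM])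
  have hr_gt : ∀ s ∈ Ioc 0 M, a < r s := fun s hs =>
    (hmem s (Ioc_subset_Icc_self hs)).1.1.lt_of_ne fun heq =>
      hs.1.ne' (by rw [← (hmem s (Ioc_subset_Icc_self hs)).2, ← heq, hua])
  have hv : ∀ s ∈ Ico 0 M, 0 < u' (r s) := fun s hs =>
    hup _ ⟨(hmem s (Ico_subset_Icc_self hs)).1.1, hr_lt s hs⟩
  have hrIoo : ∀ s ∈ Ioo 0 M, r s ∈ Ioo a b := fun s hs =>
    ⟨hr_gt s (Ioo_subset_Ioc_self hs), (hr_lt s (Ioo_subset_Ico_self hs)).trans hc.2⟩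
  have hr' : ∀ s ∈ Ioo 0 M, HasDerivAt r (u' (r s))⁻¹ s := fun s hs =>
    HasDerivAt.of_local_left_inverse (hr.continuousAt (Icc_mem_nhds hs.1 hs.2))
      (hud _ (hrIoo s hs)) (hv s (Ioo_subset_Ico_self hs)).ne'
      (Filter.mem_of_superset (Icc_mem_nhds hs.1 hs.2) fun y hy => (hmem y hy).2)
  refine ⟨hr, hu'.comp hr fun s hs => hac (hmem s hs).1, ?_, fun s hs =>
    ha.trans_le (hmem s hs).1.1, hv, hr', fun s hs => ?_⟩
  · rw [← hua, hinv a (left_mem_Icc.2 hc.1.le)]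
  · have h := (hu'd _ (hrIoo s hs)).comp s (hr' s hs)
    rwa [(hmem s (Ioo_subset_Icc_self hs)).2] at h

section Comparison

variable {n : ℕ} {f : ℝ → ℝ} {β B a M₁ M₂ m : ℝ} {ρ₁ v₁ ρ₂ v₂ : ℝ → ℝ}

theorem weightedEnergy_gap_zero_pos (B₁ : RadialBranch n f a M₁ ρ₁ v₁)
    (B₂ : RadialBranch n f a M₂ ρ₂ v₂) (hM₁ : 0 < M₁) (hv : v₁ 0 < v₂ 0) :
    0 < weightedEnergy n f ρ₂ v₂ 0 - weightedEnergy n f ρ₁ v₁ 0 := by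
  have ha : 0 < a := B₁.ρ_zero ▸ B₁.ρ_pos 0 (left_mem_Icc.2 hM₁.le)
  have hv₁ : 0 < v₁ 0 := B₁.v_pos 0 (left_mem_Ico.2 hM₁)
  rw [weightedEnergy_eq_flux_sq Fint_zero, weightedEnergy_eq_flux_sq Fint_zero, flux_sq, flux_sq,
    B₁.ρ_zero, B₂.ρ_zero, ← mul_sub]
  exact mul_pos (by positivity) (sub_pos.2 (pow_lt_pow_left₀ hv hv₁.le two_ne_zero))

theorem weightedEnergy_gap_mono (hn : 2 ≤ n) (hf : ContinuousOn f (Ici 0))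
    (hf2 : CondF2 f β B) (B₁ : RadialBranch n f a M₁ ρ₁ v₁) (B₂ : RadialBranch n f a M₂ ρ₂ v₂)
    (hm₁ : m ≤ M₁) (hm₂ : m ≤ M₂) {t : ℝ} (ht : t ∈ Icc 0 m) (htβ : t ≤ β)
    (hP : ∀ τ ∈ Ioo 0 t, ρ₂ τ < ρ₁ τ ∧ v₁ τ < v₂ τ) :
    weightedEnergy n f ρ₂ v₂ 0 - weightedEnergy n f ρ₁ v₁ 0 ≤
      weightedEnergy n f ρ₂ v₂ t - weightedEnergy n f ρ₁ v₁ t := by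
  have hsub₁ : Icc 0 t ⊆ Icc 0 M₁ := Icc_subset_Icc_right (ht.2.trans hm₁)
  have hsub₂ : Icc 0 t ⊆ Icc 0 M₂ := Icc_subset_Icc_right (ht.2.trans hm₂)
  have hIoo₁ : Ioo 0 t ⊆ Ioo 0 M₁ := Ioo_subset_Ioo_right (ht.2.trans hm₁)
  have hIoo₂ : Ioo 0 t ⊆ Ioo 0 M₂ := Ioo_subset_Ioo_right (ht.2.trans hm₂)
  refine monotoneOn_Icc_of_hasDerivAt_nonneg
    (((B₂.continuousOn_weightedEnergy hf (ht.1.trans (ht.2.trans hm₂))).mono hsub₂).sub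
      ((B₁.continuousOn_weightedEnergy hf (ht.1.trans (ht.2.trans hm₁))).mono hsub₁))
    (fun τ hτ => (B₂.hasDerivAt_weightedEnergy hn hf (hIoo₂ hτ)).sub
      (B₁.hasDerivAt_weightedEnergy hn hf (hIoo₁ hτ))) (fun τ hτ => ?_)
    (left_mem_Icc.2 ht.1) (right_mem_Icc.2 ht.1) ht.1
  have hF : Fint f τ ≤ 0 := hf2.Fint_nonpos hf ⟨hτ.1.le, (hτ.2.trans_le htβ).le⟩
  have hρ₂ : 0 ≤ ρ₂ τ := (B₂.ρ_pos τ (Ioo_subset_Icc_self (hIoo₂ hτ))).le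
  have hq : ρ₂ τ ^ (2 * n - 3) / v₂ τ ≤ ρ₁ τ ^ (2 * n - 3) / v₁ τ :=
    div_le_div₀ (pow_nonneg (hρ₂.trans (hP τ hτ).1.le) _)
      (pow_le_pow_left₀ hρ₂ (hP τ hτ).1.le _) (B₁.v_pos τ (Ioo_subset_Ico_self (hIoo₁ hτ)))
      (hP τ hτ).2.le
  have hn' : (0 : ℝ) ≤ 4 * ((n : ℝ) - 1) := by
    have : (2 : ℝ) ≤ n := by exact_mod_cast hn
    linarith
  have key := mul_nonneg hn' (mul_nonneg_of_nonpos_of_nonpos hF (sub_nonpos.2 hq))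
  simp only [mul_div_assoc] at key ⊢
  linarith

theorem flux_sq_gap_mono (hn : 2 ≤ n) (hf2 : CondF2 f β B)
    (B₁ : RadialBranch n f a M₁ ρ₁ v₁) (B₂ : RadialBranch n f a M₂ ρ₂ v₂)
    (hm₁ : m ≤ M₁) (hm₂ : m ≤ M₂) {σ t : ℝ} (hσ : β ≤ σ) (hσt : σ ≤ t) (htm : t ≤ m)
    (hρ : ∀ τ ∈ Ioo σ t, ρ₂ τ ≤ ρ₁ τ) :
    flux n ρ₂ v₂ σ ^ 2 - flux n ρ₁ v₁ σ ^ 2 ≤ flux n ρ₂ v₂ t ^ 2 - flux n ρ₁ v₁ t ^ 2 := by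
  have hσ₀ : 0 ≤ σ := hf2.nonneg.trans hσ
  have hIoo₁ : Ioo σ t ⊆ Ioo 0 M₁ := Ioo_subset_Ioo hσ₀ (htm.trans hm₁)
  have hIoo₂ : Ioo σ t ⊆ Ioo 0 M₂ := Ioo_subset_Ioo hσ₀ (htm.trans hm₂)
  refine monotoneOn_Icc_of_hasDerivAt_nonneg
    (((B₂.continuousOn_flux.pow 2).mono (Icc_subset_Icc hσ₀ (htm.trans hm₂))).sub
      ((B₁.continuousOn_flux.pow 2).mono (Icc_subset_Icc hσ₀ (htm.trans hm₁))))
    (fun τ hτ => (B₂.hasDerivAt_flux_sq hn (hIoo₂ hτ)).sub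
      (B₁.hasDerivAt_flux_sq hn (hIoo₁ hτ))) (fun τ hτ => ?_)
    (left_mem_Icc.2 hσt) (right_mem_Icc.2 hσt) hσt
  have hρ₂ : 0 ≤ ρ₂ τ := (B₂.ρ_pos τ (Ioo_subset_Icc_self (hIoo₂ hτ))).le
  have hR : (ρ₂ τ ^ (n - 1)) ^ 2 ≤ (ρ₁ τ ^ (n - 1)) ^ 2 :=
    pow_le_pow_left₀ (pow_nonneg hρ₂ _) (pow_le_pow_left₀ hρ₂ (hρ τ hτ) _) 2
  have key := mul_nonneg (hf2.pos_of_lt (hσ.trans_lt hτ.1)).le (sub_nonneg.2 hR)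
  linarith

theorem flux_sq_gap_pos (hn : 2 ≤ n) (hf : ContinuousOn f (Ici 0)) (hf2 : CondF2 f β B)
    (B₁ : RadialBranch n f a M₁ ρ₁ v₁) (B₂ : RadialBranch n f a M₂ ρ₂ v₂)
    (hm₁ : m ≤ M₁) (hm₂ : m ≤ M₂) (hm : 0 < m) (hv : v₁ 0 < v₂ 0) {t : ℝ} (ht : t ∈ Icc β m)
    (hP : ∀ τ ∈ Ioo 0 t, ρ₂ τ < ρ₁ τ ∧ v₁ τ < v₂ τ) :
    0 < flux n ρ₂ v₂ t ^ 2 - flux n ρ₁ v₁ t ^ 2 := by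
  have h₀ := weightedEnergy_gap_zero_pos B₁ B₂ (hm.trans_le hm₁) hv
  have hβ := weightedEnergy_gap_mono hn hf hf2 B₁ B₂ hm₁ hm₂ ⟨hf2.nonneg, ht.1.trans ht.2⟩ le_rfl
    fun τ hτ => hP τ ⟨hτ.1, hτ.2.trans_le ht.1⟩
  rw [weightedEnergy_eq_flux_sq hf2.Fint_eq_zero, weightedEnergy_eq_flux_sq hf2.Fint_eq_zero]
    at hβ
  have ht := flux_sq_gap_mono hn hf2 B₁ B₂ hm₁ hm₂ le_rfl ht.1 ht.2
    fun τ hτ => (hP τ ⟨hf2.nonneg.trans_lt hτ.1, hτ.2⟩).1.le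
  linarith

theorem v_lt_of_forall_lt (hn : 2 ≤ n) (hf : ContinuousOn f (Ici 0)) (hf2 : CondF2 f β B)
    (B₁ : RadialBranch n f a M₁ ρ₁ v₁) (B₂ : RadialBranch n f a M₂ ρ₂ v₂)
    (hm₁ : m ≤ M₁) (hm₂ : m ≤ M₂) (hβ₂ : β < M₂) (hv : v₁ 0 < v₂ 0) {t : ℝ} (ht : t ∈ Ioo 0 m)
    (hP : ∀ τ ∈ Ioo 0 t, ρ₂ τ < ρ₁ τ ∧ v₁ τ < v₂ τ) (hρ : ρ₂ t ≤ ρ₁ t) : v₁ t < v₂ t := by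
  have ht₂ : t ∈ Icc 0 M₂ := ⟨ht.1.le, ht.2.le.trans hm₂⟩
  have hρ₂ : 0 ≤ ρ₂ t := (B₂.ρ_pos t ht₂).le
  have hR₂ : 0 ≤ (ρ₂ t ^ (n - 1)) ^ 2 := by positivity
  have hR : (ρ₂ t ^ (n - 1)) ^ 2 ≤ (ρ₁ t ^ (n - 1)) ^ 2 :=
    pow_le_pow_left₀ (pow_nonneg hρ₂ _) (pow_le_pow_left₀ hρ₂ hρ _) 2
  refine lt_of_pow_lt_pow_left₀ 2 (B₂.v_pos t ⟨ht.1.le, ht.2.trans_le hm₂⟩).le ?_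
  rcases le_or_gt t β with htβ | hβt
  · have hZ := weightedEnergy_gap_mono hn hf hf2 B₁ B₂ hm₁ hm₂ (Ioo_subset_Icc_self ht) htβ hP
    have h₀ := weightedEnergy_gap_zero_pos B₁ B₂ (ht.1.trans (ht.2.trans_le hm₁)) hv
    have hE₂ := B₂.energy_nonneg (by omega) hf (hf2.Fint_pos_of_lt hf hβ₂).le ht₂
    have hZt : (ρ₁ t ^ (n - 1)) ^ 2 * energy f v₁ t < (ρ₂ t ^ (n - 1)) ^ 2 * energy f v₂ t := by
      unfold weightedEnergy at hZ h₀
      linarith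
    have hE : energy f v₁ t < energy f v₂ t :=
      lt_of_mul_lt_mul_left (hZt.trans_le (mul_le_mul_of_nonneg_right hR hE₂)) (hR₂.trans hR)
    simpa only [energy, add_lt_add_iff_right] using hE
  · have hW := flux_sq_gap_pos hn hf hf2 B₁ B₂ hm₁ hm₂ (ht.1.trans ht.2) hv ⟨hβt.le, ht.2.le⟩ hP
    rw [flux_sq, flux_sq, sub_pos] at hW
    exact lt_of_mul_lt_mul_left (hW.trans_le (mul_le_mul_of_nonneg_right hR (sq_nonneg _)))
      (hR₂.trans hR)

theorem eventually_ρ_lt_and_v_lt (B₁ : RadialBranch n f a M₁ ρ₁ v₁)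
    (B₂ : RadialBranch n f a M₂ ρ₂ v₂) (hm₁ : m ≤ M₁) (hm₂ : m ≤ M₂) (hm : 0 < m)
    (hv : v₁ 0 < v₂ 0) : ∀ᶠ t in 𝓝[>] 0, ρ₂ t < ρ₁ t ∧ v₁ t < v₂ t := by
  have hv₀ : ∀ᶠ t in 𝓝[>] 0, v₁ t < v₂ t := by
    have hc₁ := (B₁.continuousOn_v.mono (Icc_subset_Icc_right hm₁)).continuousWithinAt
      (left_mem_Icc.2 hm.le)
    have hc₂ := (B₂.continuousOn_v.mono (Icc_subset_Icc_right hm₂)).continuousWithinAt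
      (left_mem_Icc.2 hm.le)
    rw [ContinuousWithinAt, nhdsWithin_Icc_eq_nhdsGE hm] at hc₁ hc₂
    exact (hc₁.eventually_lt hc₂ hv).filter_mono (nhdsWithin_mono _ Ioi_subset_Ici_self)
  obtain ⟨δ, hδ, hδv⟩ := (nhdsGT_basis 0).eventually_iff.mp hv₀
  have hδ₁ : Ioo 0 (min δ m) ⊆ Ioo 0 M₁ := Ioo_subset_Ioo_right ((min_le_right _ _).trans hm₁)
  have hδ₂ : Ioo 0 (min δ m) ⊆ Ioo 0 M₂ := Ioo_subset_Ioo_right ((min_le_right _ _).trans hm₂)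
  have hgap : StrictMonoOn (fun t => ρ₁ t - ρ₂ t) (Icc 0 (min δ m)) :=
    strictMonoOn_Icc_of_hasDerivAt_pos
      ((B₁.continuousOn_ρ.mono (Icc_subset_Icc_right ((min_le_right _ _).trans hm₁))).sub
        (B₂.continuousOn_ρ.mono (Icc_subset_Icc_right ((min_le_right _ _).trans hm₂))))
      (fun t ht => (B₁.hasDerivAt_ρ t (hδ₁ ht)).sub (B₂.hasDerivAt_ρ t (hδ₂ ht)))
      fun t ht => sub_pos.2 (inv_strictAnti₀ (B₁.v_pos t (Ioo_subset_Ico_self (hδ₁ ht)))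
        (hδv ⟨ht.1, ht.2.trans_le (min_le_left _ _)⟩))
  filter_upwards [Ioo_mem_nhdsGT (lt_min hδ hm)] with t ht
  have h := hgap (left_mem_Icc.2 (lt_min hδ hm).le) (Ioo_subset_Icc_self ht) ht.1
  simp only [B₁.ρ_zero, B₂.ρ_zero, sub_self, sub_pos] at h
  exact ⟨h, hδv ⟨ht.1, ht.2.trans_le (min_le_left _ _)⟩⟩

theorem forall_ρ_lt_and_v_lt (hn : 2 ≤ n) (hf : ContinuousOn f (Ici 0)) (hf2 : CondF2 f β B)
    (B₁ : RadialBranch n f a M₁ ρ₁ v₁) (B₂ : RadialBranch n f a M₂ ρ₂ v₂)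
    (hm₁ : m ≤ M₁) (hm₂ : m ≤ M₂) (hm : 0 < m) (hβ₂ : β < M₂) (hv : v₁ 0 < v₂ 0) :
    ∀ t ∈ Ioo 0 m, ρ₂ t < ρ₁ t ∧ v₁ t < v₂ t := by
  have hIoo₁ : Ioo 0 m ⊆ Ioo 0 M₁ := Ioo_subset_Ioo_right hm₁
  have hIoo₂ : Ioo 0 m ⊆ Ioo 0 M₂ := Ioo_subset_Ioo_right hm₂
  refine forall_mem_Ioo_of_real_induction (eventually_ρ_lt_and_v_lt B₁ B₂ hm₁ hm₂ hm hv)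
    (fun t ht hPt => ?_) fun t ht hP => ?_
  · exact (((B₂.continuousAt_ρ (hIoo₂ ht)).eventually_lt (B₁.continuousAt_ρ (hIoo₁ ht))
      hPt.1).and ((B₁.continuousAt_v (hIoo₁ ht)).eventually_lt (B₂.continuousAt_v (hIoo₂ ht))
      hPt.2)).filter_mono nhdsWithin_le_nhds
  · have hρ : ρ₂ t ≤ ρ₁ t := (B₂.continuousAt_ρ (hIoo₂ ht)).continuousWithinAt.closure_le
      (by simp [closure_Ioo ht.1.ne, ht.1.le]) (B₁.continuousAt_ρ (hIoo₁ ht)).continuousWithinAt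
      fun τ hτ => (hP τ hτ).1.le
    have hvt := v_lt_of_forall_lt hn hf hf2 B₁ B₂ hm₁ hm₂ hβ₂ hv ht hP hρ
    refine ⟨sub_pos.1 (pos_of_hasDerivAt_pos_of_pos_left (g := fun t => ρ₁ t - ρ₂ t) ht.1
      ((B₁.hasDerivAt_ρ t (hIoo₁ ht)).sub (B₂.hasDerivAt_ρ t (hIoo₂ ht))) ?_
      fun τ hτ => sub_pos.2 (hP τ hτ).1), hvt⟩
    exact sub_pos.2 (inv_strictAnti₀ (B₁.v_pos t (Ioo_subset_Ico_self (hIoo₁ ht))) hvt)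

theorem flux_sq_lt (hn : 2 ≤ n) (hf : ContinuousOn f (Ici 0)) (hf2 : CondF2 f β B)
    (B₁ : RadialBranch n f a M₁ ρ₁ v₁) (B₂ : RadialBranch n f a M₂ ρ₂ v₂)
    (hm₁ : m ≤ M₁) (hm₂ : m ≤ M₂) (hm : 0 < m) (hβ₂ : β < M₂) (hv : v₁ 0 < v₂ 0) {t : ℝ}
    (ht : t ∈ Icc β m) : flux n ρ₁ v₁ t ^ 2 < flux n ρ₂ v₂ t ^ 2 :=
  sub_pos.1 <| flux_sq_gap_pos hn hf hf2 B₁ B₂ hm₁ hm₂ hm hv ht fun τ hτ =>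
    forall_ρ_lt_and_v_lt hn hf hf2 B₁ B₂ hm₁ hm₂ hm hβ₂ hv τ ⟨hτ.1, hτ.2.trans_le ht.2⟩

end Comparison

theorem step_two_general
    (n : ℕ) (hn : 2 ≤ n) (f : ℝ → ℝ) (β B : ℝ)
    (hf1 : CondF1 f) (hf2 : CondF2 f β B)
    (a b : ℝ) (ha : 0 < a)
    (u₁ u₁' u₂ u₂' : ℝ → ℝ)
    (h₁ : IsPosSolAnn n a b f u₁ u₁') (h₂ : IsPosSolAnn n a b f u₂ u₂')
    (hslope₁₂ : u₁' a < u₂' a)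
    (c₁ c₂ : ℝ) (hc₁ : c₁ ∈ Ioo a b) (hc₂ : c₂ ∈ Ioo a b)
    (hc₁up : ∀ r ∈ Ico a c₁, 0 < u₁' r)
    (hc₂up : ∀ r ∈ Ico a c₂, 0 < u₂' r) (hc₂down : ∀ r ∈ Ioo c₂ b, u₂' r < 0)
    (M₁ M₂ : ℝ) (hM₁ : M₁ = u₁ c₁) (hM₂ : M₂ = u₂ c₂)
    (hβM₂ : β < M₂)
    (r₁ r₂ : ℝ → ℝ)
    (hr₁mem : ∀ s ∈ Icc (0:ℝ) M₁, r₁ s ∈ Icc a c₁ ∧ u₁ (r₁ s) = s)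
    (hr₁inv : ∀ r ∈ Icc a c₁, r₁ (u₁ r) = r)
    (hr₂mem : ∀ s ∈ Icc (0:ℝ) M₂, r₂ s ∈ Icc a c₂ ∧ u₂ (r₂ s) = s)
    (hr₂inv : ∀ r ∈ Icc a c₂, r₂ (u₂ r) = r)
    :
    M₁ < M₂ ∧ ∀ s ∈ Ioo β M₁, r₂ s < r₁ s ∧
      (r₁ s) ^ (n - 1) * u₁' (r₁ s) < (r₂ s) ^ (n - 1) * u₂' (r₂ s) := by
  have hf := hf1.1
  have B₁ := IsPosSolAnn.radialBranch ha h₁ hc₁ hc₁up hM₁ hr₁mem hr₁inv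
  have B₂ := IsPosSolAnn.radialBranch ha h₂ hc₂ hc₂up hM₂ hr₂mem hr₂inv
  have hv : u₁' (r₁ 0) < u₂' (r₂ 0) := by rwa [B₁.ρ_zero, B₂.ρ_zero]
  have hM₂pos : 0 < M₂ := hf2.nonneg.trans_lt hβM₂
  have hM : M₁ < M₂ := by
    by_contra! h
    have hpeak : u₂' (r₂ M₂) = 0 := by
      rw [hM₂, hr₂inv c₂ ⟨hc₂.1.le, le_rfl⟩]
      exact eq_zero_of_pos_left_of_neg_right hc₂
        (h₂.2.2.1.continuousAt (Icc_mem_nhds hc₂.1 hc₂.2))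
        (fun x hx => hc₂up x ⟨hx.1.le, hx.2⟩) hc₂down
    have hlt := flux_sq_lt hn hf hf2 B₁ B₂ h le_rfl hM₂pos hβM₂ hv ⟨hβM₂.le, le_rfl⟩
    have hflux : flux n r₂ (fun s => u₂' (r₂ s)) M₂ = 0 := by simp only [flux, hpeak, mul_zero]
    rw [hflux] at hlt
    exact (sq_nonneg _).not_gt (hlt.trans_eq (zero_pow two_ne_zero))
  refine ⟨hM, fun s hs => ?_⟩
  have hs₀ : 0 < s := hf2.nonneg.trans_lt hs.1
  have hM₁pos : 0 < M₁ := hs₀.trans hs.2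
  refine ⟨(forall_ρ_lt_and_v_lt hn hf hf2 B₁ B₂ le_rfl hM.le hM₁pos hβM₂ hv s ⟨hs₀, hs.2⟩).1, ?_⟩
  exact lt_of_pow_lt_pow_left₀ 2 (B₂.flux_pos ⟨hs₀.le, hs.2.trans hM⟩).le
    (flux_sq_lt hn hf hf2 B₁ B₂ le_rfl hM.le hM₁pos hβM₂ hv ⟨hs.1.le, hs.2.le⟩)

/-- Step two (Proposition 3.3): `M₁ < M₂`, and for all `s ∈ (β, M₁)`:
`r₁(s) > r₂(s)` and `r₁(s)^{n-1} u₁'(r₁(s)) < r₂(s)^{n-1} u₂'(r₂(s))`. -/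
theorem step_two
    (n : ℕ) (hn : 2 ≤ n) (f : ℝ → ℝ) (β B : ℝ)
    (hf1 : CondF1 f) (hf2 : CondF2 f β B)
    (a b : ℝ) (ha : 0 < a) (hab : a < b)
    (u₁ u₁' u₂ u₂' : ℝ → ℝ)
    (h₁ : IsPosSolAnn n a b f u₁ u₁') (h₂ : IsPosSolAnn n a b f u₂ u₂')
    (hslope₁ : 0 < u₁' a) (hslope₁₂ : u₁' a < u₂' a)
    (c₁ c₂ : ℝ) (hc₁ : c₁ ∈ Ioo a b) (hc₂ : c₂ ∈ Ioo a b)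
    (hc₁up : ∀ r ∈ Ico a c₁, 0 < u₁' r) (hc₁down : ∀ r ∈ Ioo c₁ b, u₁' r < 0)
    (hc₂up : ∀ r ∈ Ico a c₂, 0 < u₂' r) (hc₂down : ∀ r ∈ Ioo c₂ b, u₂' r < 0)
    (M₁ M₂ : ℝ) (hM₁ : M₁ = u₁ c₁) (hM₂ : M₂ = u₂ c₂)
    (hβM₁ : β < M₁) (hβM₂ : β < M₂)
    (r₁ r₂ : ℝ → ℝ)
    (hr₁mem : ∀ s ∈ Icc (0:ℝ) M₁, r₁ s ∈ Icc a c₁ ∧ u₁ (r₁ s) = s)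
    (hr₁inv : ∀ r ∈ Icc a c₁, r₁ (u₁ r) = r)
    (hr₂mem : ∀ s ∈ Icc (0:ℝ) M₂, r₂ s ∈ Icc a c₂ ∧ u₂ (r₂ s) = s)
    (hr₂inv : ∀ r ∈ Icc a c₂, r₂ (u₂ r) = r)
    :
    M₁ < M₂ ∧ ∀ s ∈ Ioo β M₁, r₂ s < r₁ s ∧
      (r₁ s) ^ (n - 1) * u₁' (r₁ s) < (r₂ s) ^ (n - 1) * u₂' (r₂ s) :=
  step_two_general n hn f β B hf1 hf2 a b ha u₁ u₁' u₂ u₂' h₁ h₂ hslope₁₂ c₁ c₂ hc₁ hc₂ hc₁up hc₂up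
    hc₂down M₁ M₂ hM₁ hM₂ hβM₂ r₁ r₂ hr₁mem hr₁inv hr₂mem hr₂inv
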